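/- arXiv:1310.2091 — 3 statements merged into one kernel-verified Lean document; each statement's English description precedes it below -/
import Mathlib

section
/- Let a = (m,ε) be a decorated number with m ≤ n, and let c = (n+1) ⊖ a. If decorated numbers a' ≤ a and c' ≤ c satisfy (n+1,0) ≤ a' ⊕ c', then a' = a and c' = c. -/
/-- Decorations: `-`, no decoration, `+`. -/
inductive Dec : Type
  | neg | zero | pos
  deriving DecidableEq

namespace Dec

/-- The product of decorations: `ε⊗0 = ε`, `ε⊗ε = ε`, `+⊗- = -⊗+ = -`. -/
def otimes : Dec → Dec → Dec
  | zero, e => e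
  | e, zero => e
  | pos, pos => pos
  | neg, neg => neg
  | pos, neg => neg
  | neg, pos => neg

/-- The reversal of decorations: `-(+) = -`, `-(-) = +`, `-(0) = 0`. -/
def rev : Dec → Dec
  | pos => neg
  | neg => pos
  | zero => zero

/-- The dual product of decorations, `(ε₁, ε₂) ↦ -((-ε₁)⊗(-ε₂))`. -/
def dual (e₁ e₂ : Dec) : Dec := rev (otimes (rev e₁) (rev e₂))

/-- Numerical value of a decoration, realizing the order `- < 0 < +`. -/
def val : Dec → ℤ
  | neg => -1
  | zero => 0
  | pos => 1

end Dec

/-- A decorated number is a pair `(n, ε)`, `n ∈ ℕ`, `ε` a decoration. -/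
abbrev DecNum : Type := ℕ × Dec

namespace DecNum

/-- The lexicographic order `⋯ < n⁻ < n < n⁺ < (n+1)⁻ < ⋯` on decorated numbers. -/
def dle (a b : DecNum) : Prop := a.1 < b.1 ∨ (a.1 = b.1 ∧ a.2.val ≤ b.2.val)

/-- The addition `⊞` of decorated numbers: `(n,ε₁) ⊞ (m,ε₂) = (n+m, ε₁⊗ε₂)`. -/
def dadd (a b : DecNum) : DecNum := (a.1 + b.1, Dec.otimes a.2 b.2)

/-- The addition `⊕` of decorated numbers: `(n,ε₁) ⊕ (m,ε₂) = (n+m, -((-ε₁)⊗(-ε₂)))`. -/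
def oadd (a b : DecNum) : DecNum := (a.1 + b.1, Dec.dual a.2 b.2)

/-- The complement `(n+1) ⊖ (m,ε) = (n+1-m, -ε)` of a decorated number. -/
def dsub (n : ℕ) (a : DecNum) : DecNum := (n + 1 - a.1, Dec.rev a.2)

end DecNum

/-!
Send `(n, ε)` to the pair `(n, val ε)` in the lexicographically ordered group `ℤ ×ₗ ℤ`. This is an
order embedding, it turns the complement `(n+1) ⊖ a` into the difference `(n+1, 0) - a`, and the
condition `(N, 0) ≤ a ⊕ c` into `(N, 0) ≤ a + c`, because the decoration `-((-ε₁)⊗(-ε₂))` is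
nonnegative exactly when `val ε₁ + val ε₂` is. The claim is then rigidity in an ordered group: `x' ≤ x`, `y' ≤ s - x` and
`s ≤ x' + y'` force `x' = x` and `y' = s - x`.
-/

theorem eq_and_eq_of_le_of_le_sub_of_le_add {G : Type*} [AddCommGroup G] [PartialOrder G]
    [IsOrderedAddMonoid G] {s x x' y' : G} (hx : x' ≤ x) (hy : y' ≤ s - x) (hs : s ≤ x' + y') :
    x' = x ∧ y' = s - x := by
  refine (add_eq_add_iff_eq_and_eq hx hy).1 (le_antisymm ?_ ?_)
  · simpa using add_le_add hx hy
  · simpa using hs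

namespace Dec

theorem val_injective : Function.Injective val := by
  intro a b
  cases a <;> cases b <;> simp [val]

theorem val_rev (e : Dec) : (rev e).val = -e.val := by
  cases e <;> rfl

theorem val_dual_nonneg_iff (e₁ e₂ : Dec) : 0 ≤ (dual e₁ e₂).val ↔ 0 ≤ e₁.val + e₂.val := by
  cases e₁ <;> cases e₂ <;> decide

end Dec

namespace DecNum

def toLexInt (a : DecNum) : ℤ ×ₗ ℤ := toLex ((a.1 : ℤ), a.2.val)

theorem toLexInt_injective : Function.Injective toLexInt := by
  rintro ⟨m₁, e₁⟩ ⟨m₂, e₂⟩ h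
  simp only [toLexInt, toLex_inj, Prod.mk.injEq, Nat.cast_inj] at h
  rw [h.1, Dec.val_injective h.2]

theorem dle_iff (a b : DecNum) : dle a b ↔ toLexInt a ≤ toLexInt b := by
  rw [toLexInt, toLexInt, Prod.Lex.toLex_le_toLex, dle, Nat.cast_lt, Nat.cast_inj]

theorem toLexInt_dsub {n : ℕ} {a : DecNum} (h : a.1 ≤ n + 1) :
    toLexInt (dsub n a) = toLex (((n + 1 : ℕ) : ℤ), 0) - toLexInt a := by
  simp [toLexInt, dsub, ← toLex_sub, Nat.cast_sub h, Dec.val_rev]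

theorem dle_oadd_iff (N : ℕ) (a c : DecNum) :
    dle (N, Dec.zero) (oadd a c) ↔ toLexInt (N, Dec.zero) ≤ toLexInt a + toLexInt c := by
  rw [toLexInt, toLexInt, toLexInt, ← toLex_add, Prod.Lex.toLex_le_toLex, dle, oadd]
  dsimp only [Prod.fst_add, Prod.snd_add]
  rw [← Nat.cast_add, Nat.cast_lt, Nat.cast_inj, Dec.val, Dec.val_dual_nonneg_iff]

end DecNum

/-- let `a = (m,ε)` with `m ≤ n` and `c = (n+1) ⊖ a`.  If `a' ≤ a`,
`c' ≤ c` and `(n+1,0) ≤ a' ⊕ c'`, then `a' = a` and `c' = c`. -/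
theorem decNum_oadd_rigidity (n m : ℕ) (ε : Dec) (h : m ≤ n) (a' c' : DecNum)
    (ha : DecNum.dle a' (m, ε)) (hc : DecNum.dle c' (DecNum.dsub n (m, ε)))
    (hsum : DecNum.dle (n + 1, Dec.zero) (DecNum.oadd a' c')) :
    a' = (m, ε) ∧ c' = DecNum.dsub n (m, ε) := by
  have hm : (m, ε).1 ≤ n + 1 := Nat.le_succ_of_le h
  rw [DecNum.dle_iff, DecNum.toLexInt_dsub hm] at hc
  rw [DecNum.dle_iff] at ha
  rw [DecNum.dle_oadd_iff] at hsum
  obtain ⟨ha', hc'⟩ := eq_and_eq_of_le_of_le_sub_of_le_add ha hc hsum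
  exact ⟨DecNum.toLexInt_injective ha',
    DecNum.toLexInt_injective (hc'.trans (DecNum.toLexInt_dsub hm).symm)⟩
end

section
/- For a dimension type D with 0 < dim D = n < ∞, one has (n+1) ⊖ ((n+1) ⊖ D) = D, i.e., n+1 − (n+1 ⊖ D) = D. -/
/-- A (finite) dimension type is encoded by decorated numbers: an undecorated
value at the index `none` (standing for `ℚ`) and a decorated number at each
prime `p` (the value `D(ℤ_p)` together with the `p`-singularity type as
decoration). -/
abbrev EncDimType : Type := Option Nat.Primes → DecNum

/-- The constraints on the encoding of a dimension type: `D(0) = D(ℚ)` has no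
decoration, `0` has no decoration, and `1` does not have the `-` decoration. -/
def IsEncDimType (D : EncDimType) : Prop :=
  (D none).2 = Dec.zero ∧
  ∀ i : Option Nat.Primes, ((D i).1 = 0 → (D i).2 = Dec.zero) ∧
    ((D i).1 = 1 → (D i).2 ≠ Dec.neg)

/-- The contribution of a decorated value `D(p)` to `dim D = sup{D(G) : G ∈ σ}`
over the whole Bockstein basis: for a `p⁺`-singular `D` one has
`D(ℤ_{(p)}) ≥ D(ℤ_{p^∞}) + 1 = D(ℤ_p) + 1`, otherwise the largest value among
the groups at `p` is `D(ℤ_p)` itself (up to the separately counted `D(ℚ)`). -/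
def contrib (a : DecNum) : ℕ := if a.2 = Dec.pos then a.1 + 1 else a.1

/-- `dim D = n` for an encoded dimension type. -/
def encDimEq (D : EncDimType) (n : ℕ) : Prop :=
  (∀ i, contrib (D i) ≤ n) ∧ (∃ i, contrib (D i) = n)

/-- The pointwise operation `D₁ ⊞ D₂`. -/
def encDadd (D₁ D₂ : EncDimType) : EncDimType := fun i => DecNum.dadd (D₁ i) (D₂ i)

/-- The pointwise operation `D₁ ⊕ D₂`. -/
def encOadd (D₁ D₂ : EncDimType) : EncDimType := fun i => DecNum.oadd (D₁ i) (D₂ i)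

/-- The pointwise complement `n+1 ⊖ D`, `(n+1 ⊖ D)(p) = (n+1−m, −ε)` for
`D(p) = (m, ε)`. -/
def encDsub (n : ℕ) (D : EncDimType) : EncDimType := fun i => DecNum.dsub n (D i)

/-- The pointwise order on encoded dimension types. -/
def encLe (D₁ D₂ : EncDimType) : Prop := ∀ i, DecNum.dle (D₁ i) (D₂ i)

/-- The constant dimension type `n` (every group is sent to `n`, undecorated). -/
def encConst (n : ℕ) : EncDimType := fun _ => (n, Dec.zero)

theorem Dec.rev_involutive : Function.Involutive Dec.rev := by
  intro e
  cases e <;> rfl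

theorem DecNum.dsub_dsub {n : ℕ} {a : DecNum} (h : a.1 ≤ n + 1) :
    DecNum.dsub n (DecNum.dsub n a) = a := by
  ext
  · simp only [DecNum.dsub]
    omega
  · exact Dec.rev_involutive a.2

theorem fst_le_contrib (a : DecNum) : a.1 ≤ contrib a := by
  unfold contrib
  split_ifs <;> omega

theorem encDimEq.fst_le {D : EncDimType} {n : ℕ} (h : encDimEq D n) (i : Option Nat.Primes) :
    (D i).1 ≤ n :=
  (fst_le_contrib (D i)).trans (h.1 i)

theorem encDsub_encDsub_general (D : EncDimType) (n : ℕ)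
    (hdim : encDimEq D n) :
    encDsub n (encDsub n D) = D :=
  funext fun i => DecNum.dsub_dsub ((hdim.fst_le i).trans n.le_succ)

/-- for a dimension type `D` with `0 < dim D = n < ∞`,
`(n+1) ⊖ ((n+1) ⊖ D) = D`. -/
theorem encDsub_encDsub (D : EncDimType) (n : ℕ)
    (hD : IsEncDimType D) (hdim : encDimEq D n) (hn : 0 < n) :
    encDsub n (encDsub n D) = D :=
  encDsub_encDsub_general D n hdim
end

section
/- For dimension types D₁, D₂ (functions determined by decorated numbers at each prime and an undecorated rational value), the operation D₁ ⊞ D₂ defined pointwise by adding decorated numbers with decoration product ⊗ yields a dimension type, i.e., ⊞ preserves the property of being p-regular or p±-singular at each prime. -/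
namespace Dec

@[simp]
theorem otimes_zero (e : Dec) : otimes e zero = e := by
  cases e <;> rfl

theorem otimes_ne_neg {e₁ e₂ : Dec} (h₁ : e₁ ≠ neg) (h₂ : e₂ ≠ neg) : otimes e₁ e₂ ≠ neg := by
  cases e₁ <;> cases e₂ <;> simp_all [otimes]

end Dec

namespace DecNum

def IsAdmissible (a : DecNum) : Prop :=
  (a.1 = 0 → a.2 = Dec.zero) ∧ (a.1 = 1 → a.2 ≠ Dec.neg)

theorem IsAdmissible.dadd {a b : DecNum} (ha : a.IsAdmissible) (hb : b.IsAdmissible) :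
    (DecNum.dadd a b).IsAdmissible := by
  obtain ⟨ha₀, ha₁⟩ := ha
  obtain ⟨hb₀, hb₁⟩ := hb
  refine ⟨fun hsum => ?_, fun hsum => ?_⟩
  · simp only [DecNum.dadd] at hsum ⊢
    rw [ha₀ (by omega), hb₀ (by omega), Dec.otimes_zero]
  · simp only [DecNum.dadd] at hsum ⊢
    rcases Nat.eq_zero_or_pos a.1 with ha | ha
    · exact Dec.otimes_ne_neg (by simp [ha₀ ha]) (hb₁ (by omega))
    · exact Dec.otimes_ne_neg (ha₁ (by omega)) (by simp [hb₀ (by omega)])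

end DecNum

/-- for dimension types `D₁`, `D₂`, the pointwise operation
`D₁ ⊞ D₂` yields a dimension type. -/
theorem encDadd_isDimType (D₁ D₂ : EncDimType)
    (h₁ : IsEncDimType D₁) (h₂ : IsEncDimType D₂) :
    IsEncDimType (encDadd D₁ D₂) :=
  ⟨by simp [encDadd, DecNum.dadd, h₁.1, h₂.1],
    fun i => DecNum.IsAdmissible.dadd (h₁.2 i) (h₂.2 i)⟩
end
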